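/- arXiv:2112.08293 — 2 statements merged into one kernel-verified Lean document; each statement's English description precedes it below -/
import Mathlib

section
/- Let G be a group, A a left ℤ[G]-module, α ∈ A, and σ ∈ G with σ ≠ 1. If there exists a ℤ[G]-module homomorphism φ: A → B, where B is an abelian group with trivial G-action, such that φ(α) ≠ 0, then the element α[σ] is nonzero in Wh₁⁺(G;A) (and its image φ(α)[σ] is nonzero in Wh₁⁺(G;B)). -/
open scoped TensorProduct

noncomputable section

variable (G : Type) [Group G]

/-- The integral group ring `ℤ[G]`. -/
abbrev GrpRing := MonoidAlgebra ℤ G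

/-- A group element `g ∈ G` regarded as an element of `ℤ[G]`. -/
def ofg (g : G) : GrpRing G := MonoidAlgebra.single g 1

/-- The conjugation action of `g ∈ G` on `ℤ[G]`, `h ↦ g h g⁻¹` extended `ℤ`-linearly. -/
def conjZ (g : G) : GrpRing G ≃ₗ[ℤ] GrpRing G :=
  (MonoidAlgebra.domCongr ℤ ℤ (MulAut.conj g)).toLinearEquiv

/-- The subgroup of `N` generated by all `g·n − n`; the coinvariants
`N_G = H₀(G;N)` is the quotient of `N` by this subgroup. -/
def coinvSub {N : Type} [AddCommGroup N] (act : G → N ≃+ N) : AddSubgroup N :=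
  AddSubgroup.closure {x | ∃ (g : G) (n : N), x = act g n - n}

/-- The coinvariants `N_G = H₀(G;N)` of a `G`-module `N`. -/
abbrev Coinv {N : Type} [AddCommGroup N] (act : G → N ≃+ N) : Type := N ⧸ coinvSub G act

variable (A : Type) [AddCommGroup A] [Module (GrpRing G) A]

/-- The action of `g ∈ G` on the left `ℤ[G]`-module `A`. -/
def actA (g : G) : A ≃ₗ[ℤ] A :=
  (AddEquiv.mk' ⟨fun a => ofg G g • a, fun a => ofg G g⁻¹ • a,
    fun a => by simp [smul_smul, ofg, MonoidAlgebra.single_mul_single, ← MonoidAlgebra.one_def],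
    fun a => by simp [smul_smul, ofg, MonoidAlgebra.single_mul_single, ← MonoidAlgebra.one_def]⟩
    (fun a b => smul_add _ a b)).toIntLinearEquiv

/-- `A[G] = A ⊗_ℤ ℤ[G]`. -/
abbrev AG := A ⊗[ℤ] GrpRing G

/-- The diagonal action `g·(a ⊗ h) = (g·a) ⊗ (g h g⁻¹)` of `g ∈ G` on `A[G]`. -/
def diag (g : G) : AG G A ≃+ AG G A :=
  (TensorProduct.congr (actA G A g) (conjZ G g)).toAddEquiv

/-- The map `a ↦ a ⊗ 1`. -/
def tensOne : A →ₗ[ℤ] AG G A := (TensorProduct.mk ℤ A (GrpRing G)).flip 1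

/-- `A[1] = A ⊗ ℤ·1`, as an additive subgroup of `A[G]`. -/
def A1 : AddSubgroup (AG G A) := (tensOne G A).toAddMonoidHom.range

lemma conjZ_one (g : G) : conjZ G g 1 = 1 := by simp [conjZ]

lemma A1_invariant (g : G) :
    (A1 G A).map (diag G A g).toAddMonoidHom = A1 G A := by
  apply le_antisymm
  · rintro _ ⟨_, ⟨a, rfl⟩, rfl⟩
    refine ⟨actA G A g a, ?_⟩
    show _ = (TensorProduct.congr (actA G A g) (conjZ G g)) (a ⊗ₜ[ℤ] 1)
    simp [tensOne, TensorProduct.congr_tmul, conjZ_one]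
    rfl
  · rintro _ ⟨a, rfl⟩
    refine ⟨tensOne G A ((actA G A g).symm a), ⟨_, rfl⟩, ?_⟩
    show (TensorProduct.congr (actA G A g) (conjZ G g)) _ = _
    change TensorProduct.congr _ _ (_ ⊗ₜ[ℤ] 1) = _ ⊗ₜ[ℤ] 1
    simp [tensOne, TensorProduct.congr_tmul, conjZ_one]

/-- The quotient `G`-module `A[G]/A[1]`. -/
abbrev AGmod1 := AG G A ⧸ A1 G A

/-- The diagonal action of `g ∈ G` descended to `A[G]/A[1]`. -/
def diagQ (g : G) : AGmod1 G A ≃+ AGmod1 G A :=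
  QuotientAddGroup.congr (A1 G A) (A1 G A) (diag G A g) (A1_invariant G A g)

/-- `Wh₁⁺(G;A) := (A[G]/A[1])_G`. -/
abbrev Wh : Type := Coinv G (diagQ G A)

/-- `a[σ] ∈ Wh₁⁺(G;A)`, the class of `a ⊗ σ`. -/
def whElem (a : A) (σ : G) : Wh G A :=
  QuotientAddGroup.mk (QuotientAddGroup.mk (a ⊗ₜ[ℤ] ofg G σ))

section TrivialAction

variable (B : Type) [AddCommGroup B]

/-- `B[G] = B ⊗_ℤ ℤ[G]` for an abelian group `B` with trivial `G`-action. -/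
abbrev AGT := B ⊗[ℤ] GrpRing G

/-- The diagonal action `g·(b ⊗ h) = b ⊗ (g h g⁻¹)` on `B[G]` (trivial action on `B`). -/
def diagT (g : G) : AGT G B ≃+ AGT G B :=
  (TensorProduct.congr (LinearEquiv.refl ℤ B) (conjZ G g)).toAddEquiv

/-- The map `b ↦ b ⊗ 1`. -/
def tensOneT : B →ₗ[ℤ] AGT G B := (TensorProduct.mk ℤ B (GrpRing G)).flip 1

/-- `B[1] = B ⊗ ℤ·1`, as an additive subgroup of `B[G]`. -/
def B1 : AddSubgroup (AGT G B) := (tensOneT G B).toAddMonoidHom.range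

lemma B1_invariant (g : G) :
    (B1 G B).map (diagT G B g).toAddMonoidHom = B1 G B := by
  apply le_antisymm
  · rintro _ ⟨_, ⟨b, rfl⟩, rfl⟩
    refine ⟨b, ?_⟩
    show _ = (TensorProduct.congr (LinearEquiv.refl ℤ B) (conjZ G g)) (b ⊗ₜ[ℤ] 1)
    simp [tensOneT, TensorProduct.congr_tmul, conjZ_one]
    rfl
  · rintro _ ⟨b, rfl⟩
    refine ⟨tensOneT G B b, ⟨_, rfl⟩, ?_⟩
    show (TensorProduct.congr (LinearEquiv.refl ℤ B) (conjZ G g)) _ = _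
    change TensorProduct.congr _ _ (_ ⊗ₜ[ℤ] 1) = _ ⊗ₜ[ℤ] 1
    simp [tensOneT, TensorProduct.congr_tmul, conjZ_one]

/-- The quotient `G`-module `B[G]/B[1]`. -/
abbrev BGmod1 := AGT G B ⧸ B1 G B

/-- The diagonal action of `g ∈ G` descended to `B[G]/B[1]`. -/
def diagQT (g : G) : BGmod1 G B ≃+ BGmod1 G B :=
  QuotientAddGroup.congr (B1 G B) (B1 G B) (diagT G B g) (B1_invariant G B g)

/-- `Wh₁⁺(G;B) := (B[G]/B[1])_G` for `B` with trivial `G`-action. -/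
abbrev WhT : Type := Coinv G (diagQT G B)

/-- `b[σ] ∈ Wh₁⁺(G;B)`, the class of `b ⊗ σ`. -/
def whElemT (b : B) (σ : G) : WhT G B :=
  QuotientAddGroup.mk (QuotientAddGroup.mk (b ⊗ₜ[ℤ] ofg G σ))

end TrivialAction

/-! The functional `ψ : ℤ[G] → ℤ` summing the coefficients away from the identity kills `1` and
is invariant under conjugation, since `h g h⁻¹ = 1` only for `g = 1`. Hence for a `G`-invariant
`φ : A → B` the pairing `a ⊗ x ↦ ψ(x) • φ(a)` descends to a homomorphism `Wh₁⁺(G;A) → B`, which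
sends `α[σ]` to `φ(α) ≠ 0` when `σ ≠ 1`; for `Wh₁⁺(G;B)` take `φ = id`. -/

section Coinvariants

variable {G} {N M : Type} [AddCommGroup N] [AddCommGroup M]

def Coinv.lift (act : G → N ≃+ N) (f : N →+ M) (hf : ∀ g n, f (act g n) = f n) :
    Coinv G act →+ M :=
  QuotientAddGroup.lift _ f <| (AddSubgroup.closure_le _).mpr <| by
    rintro _ ⟨g, n, rfl⟩
    simp [hf]

lemma QuotientAddGroup.lift_congr_self (S : AddSubgroup N) (e : N ≃+ N)
    (he : S.map e.toAddMonoidHom = S) (f : N →+ M) (hfS : ∀ n ∈ S, f n = 0)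
    (hf : ∀ n, f (e n) = f n) (y : N ⧸ S) :
    QuotientAddGroup.lift S f hfS (QuotientAddGroup.congr S S e he y) =
      QuotientAddGroup.lift S f hfS y := by
  induction y using QuotientAddGroup.induction_on with
  | H n => exact hf n

def Coinv.liftQuotient (S : AddSubgroup N) (act : G → N ≃+ N)
    (hS : ∀ g, S.map (act g).toAddMonoidHom = S) (f : N →+ M) (hfS : ∀ n ∈ S, f n = 0)
    (hf : ∀ g n, f (act g n) = f n) :
    Coinv G (fun g => QuotientAddGroup.congr S S (act g) (hS g)) →+ M :=
  Coinv.lift _ (QuotientAddGroup.lift S f hfS) fun g =>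
    QuotientAddGroup.lift_congr_self S (act g) (hS g) f hfS (hf g)

end Coinvariants

section OffOneAugmentation

variable {G}

open scoped Classical in
def offOneAugmentation : GrpRing G →ₗ[ℤ] ℤ :=
  (MonoidAlgebra.basis G ℤ).constr ℤ fun g => if g = 1 then 0 else 1

open scoped Classical in
lemma offOneAugmentation_ofg (g : G) :
    offOneAugmentation (ofg G g) = if g = 1 then 0 else 1 :=
  (MonoidAlgebra.basis G ℤ).constr_basis ℤ _ g

lemma offOneAugmentation_one : offOneAugmentation (1 : GrpRing G) = 0 := by
  rw [show (1 : GrpRing G) = ofg G 1 from MonoidAlgebra.one_def, offOneAugmentation_ofg,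
    if_pos rfl]

lemma offOneAugmentation_conjZ (g : G) (x : GrpRing G) :
    offOneAugmentation (conjZ G g x) = offOneAugmentation x := by
  classical
  suffices offOneAugmentation ∘ₗ (conjZ G g).toLinearMap = offOneAugmentation from
    LinearMap.congr_fun this x
  refine (MonoidAlgebra.basis G ℤ).ext fun h => ?_
  have hconj : conjZ G g (ofg G h) = ofg G (g * h * g⁻¹) := by simp [conjZ, ofg]
  show offOneAugmentation (conjZ G g (ofg G h)) = offOneAugmentation (ofg G h)
  rw [hconj, offOneAugmentation_ofg, offOneAugmentation_ofg]
  exact if_congr conj_eq_one_iff rfl rfl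

variable {N M : Type} [AddCommGroup N] [AddCommGroup M]

def offOnePairing (f : N →+ M) : N ⊗[ℤ] GrpRing G →ₗ[ℤ] M :=
  (TensorProduct.rid ℤ M).toLinearMap ∘ₗ TensorProduct.map f.toIntLinearMap offOneAugmentation

lemma offOnePairing_tmul (f : N →+ M) (n : N) (x : GrpRing G) :
    offOnePairing f (n ⊗ₜ x) = offOneAugmentation x • f n := rfl

lemma offOnePairing_tmul_one (f : N →+ M) (n : N) :
    offOnePairing f (n ⊗ₜ (1 : GrpRing G)) = 0 := by
  rw [offOnePairing_tmul, offOneAugmentation_one, zero_smul]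

lemma offOnePairing_congr_conjZ (f : N →+ M) (e : N ≃ₗ[ℤ] N) (he : ∀ n, f (e n) = f n) (g : G)
    (t : N ⊗[ℤ] GrpRing G) :
    offOnePairing f (TensorProduct.congr e (conjZ G g) t) = offOnePairing f t := by
  suffices offOnePairing f ∘ₗ (TensorProduct.congr e (conjZ G g)).toLinearMap = offOnePairing f from
    LinearMap.congr_fun this t
  refine TensorProduct.ext' fun n x => ?_
  show offOnePairing f (TensorProduct.congr e (conjZ G g) (n ⊗ₜ x)) = _
  rw [TensorProduct.congr_tmul, offOnePairing_tmul, offOneAugmentation_conjZ, he]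
  rfl

end OffOneAugmentation

section WhPairing

variable {G} {A} {B : Type} [AddCommGroup B]

def whPairing (φ : A →+ B)
    (hφ : ∀ (g : G) (a : A), φ (ofg G g • a) = φ a) : Wh G A →+ B :=
  Coinv.liftQuotient (A1 G A) (diag G A) (A1_invariant G A) (offOnePairing φ).toAddMonoidHom
    (by rintro _ ⟨a, rfl⟩; exact offOnePairing_tmul_one φ a)
    (fun g => offOnePairing_congr_conjZ φ (actA G A g) (hφ g) g)

lemma whPairing_whElem (φ : A →+ B)
    (hφ : ∀ (g : G) (a : A), φ (ofg G g • a) = φ a) (a : A) (σ : G) :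
    whPairing φ hφ (whElem G A a σ) = offOneAugmentation (ofg G σ) • φ a := rfl

variable (B) in
def whPairingT : WhT G B →+ B :=
  Coinv.liftQuotient (B1 G B) (diagT G B) (B1_invariant G B)
    (offOnePairing (AddMonoidHom.id B)).toAddMonoidHom
    (by rintro _ ⟨b, rfl⟩; exact offOnePairing_tmul_one _ b)
    (fun g => offOnePairing_congr_conjZ _ (LinearEquiv.refl ℤ B) (fun _ => rfl) g)

lemma whPairingT_whElemT (b : B) (σ : G) :
    whPairingT B (whElemT G B b σ) = offOneAugmentation (ofg G σ) • b := rfl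

end WhPairing

/-- Let `G` be a group, `A` a left `ℤ[G]`-module, `α ∈ A`, and `σ ∈ G` with
`σ ≠ 1`. If there is a `ℤ[G]`-module homomorphism `φ : A → B` to an abelian group `B` with
trivial `G`-action (i.e. an additive map with `φ(g·a) = φ(a)`) such that `φ(α) ≠ 0`, then
`α[σ]` is nonzero in `Wh₁⁺(G;A)`, and its image `φ(α)[σ]` is nonzero in `Wh₁⁺(G;B)`. -/
theorem stmt_4 (G : Type) [Group G] (A : Type) [AddCommGroup A] [Module (GrpRing G) A]
    (B : Type) [AddCommGroup B] (φ : A →+ B)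
    (hφ : ∀ (g : G) (a : A), φ (ofg G g • a) = φ a)
    (α : A) (σ : G) (hσ : σ ≠ 1) (hα : φ α ≠ 0) :
    whElem G A α σ ≠ 0 ∧ whElemT G B (φ α) σ ≠ 0 := by
  have hψ : offOneAugmentation (ofg G σ) = 1 := by
    rw [offOneAugmentation_ofg, if_neg hσ]
  constructor
  · refine ne_zero_of_map (f := whPairing φ hφ) ?_
    rwa [whPairing_whElem, hψ, one_smul]
  · refine ne_zero_of_map (f := whPairingT B) ?_
    rwa [whPairingT_whElemT, hψ, one_smul]
end
end

section
/- Let M be a topological space, r: M → M a homeomorphism, and g: M × [0,1] → M × [0,1] a homeomorphism with g(x,0) = (x,0) and g(x,1) = (r(x),1) for all x ∈ M. Let τ(x,t) = (x,1−t) and ε(g) = (r × id)⁻¹ ∘ τ ∘ g ∘ τ. Define G: M × [0,2] → M × [0,2] by G(x,t) = g(x,t) for t ∈ [0,1] and G(x,t) = (r(x),t) for t ∈ [1,2], and define E: M × [0,2] → M × [0,2] by E(x,t) = (x,t) for t ∈ [0,1] and E(x,t) = s(ε(g)(x,t−1)) for t ∈ [1,2], where s(y,u) = (y,u+1). Then G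 and E are well-defined and (G ∘ E)(x,t) = g(x,t) for all t ∈ [0,1], while (G ∘ E)(x,t) = s((τ ∘ g ∘ τ)(x,t−1)) for all t ∈ [1,2]; in other words, after expanding the interval to [0,2], the composite g ∘ ε(g) equals the map which is g on M × [0,1] and the upside-down copy τ ∘ g ∘ τ of g on M × [1,2]. -/
open unitInterval

noncomputable section

variable (M : Type) [TopologicalSpace M]

/-- The interval `[0,2] ⊂ ℝ`. -/
abbrev I2 : Type := Set.Icc (0 : ℝ) 2

/-- The homeomorphism `τ : M × [0,1] → M × [0,1]`, `τ(x,t) = (x, 1 − t)`. -/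
def tau : M × I ≃ₜ M × I :=
  (Homeomorph.refl M).prodCongr unitInterval.symmHomeomorph

/-- The involution `ε(g) = (r × id)⁻¹ ∘ τ ∘ g ∘ τ`. -/
def eps (r : M ≃ₜ M) (g : M × I ≃ₜ M × I) : M × I ≃ₜ M × I :=
  ((tau M).trans g).trans ((tau M).trans (r.prodCongr (Homeomorph.refl I)).symm)

/-- The inclusion `M × [0,1] → M × [0,2]`. -/
def incl : M × I → M × I2 := fun p =>
  (p.1, ⟨(p.2 : ℝ), p.2.2.1, le_trans p.2.2.2 one_le_two⟩)

/-- The shift `s(y,u) = (y, u + 1)`, mapping `M × [0,1]` into `M × [0,2]`. -/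
def shift : M × I → M × I2 := fun p =>
  (p.1, ⟨(p.2 : ℝ) + 1, by have h1 := p.2.2.1; linarith, by have h2 := p.2.2.2; linarith⟩)

/-- `G : M × [0,2] → M × [0,2]`, given by `g` on `M × [0,1]` and by `r × id` on
`M × [1,2]`. -/
def GMap (r : M ≃ₜ M) (g : M × I ≃ₜ M × I) : M × I2 → M × I2 := fun p =>
  if h : (p.2 : ℝ) ≤ 1 then incl M (g (p.1, ⟨(p.2 : ℝ), p.2.2.1, h⟩))
  else (r p.1, p.2)

/-- `E : M × [0,2] → M × [0,2]`, given by the identity on `M × [0,1]` and by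
`s ∘ ε(g) ∘ (shift down)` on `M × [1,2]`. -/
def EMap (r : M ≃ₜ M) (g : M × I ≃ₜ M × I) : M × I2 → M × I2 := fun p =>
  if h : (p.2 : ℝ) ≤ 1 then p
  else shift M (eps M r g (p.1,
    ⟨(p.2 : ℝ) - 1, by have := not_le.1 h; linarith, by have := p.2.2.2; linarith⟩))

/-- With `g(x,0) = (x,0)` and `g(x,1) = (r(x),1)`, the maps `G` and `E`
are well defined (in particular the two defining formulas for each agree at `t = 1`), and
`G ∘ E` equals `g` on `M × [0,1]` and equals the upside-down copy `s ∘ (τ ∘ g ∘ τ)` of `g`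
on `M × [1,2]`. -/
theorem stmt_11 (M : Type) [TopologicalSpace M] (r : M ≃ₜ M) (g : M × I ≃ₜ M × I)
    (hg0 : ∀ x : M, g (x, 0) = (x, 0)) (hg1 : ∀ x : M, g (x, 1) = (r x, 1)) :
    (∀ x : M, GMap M r g (x, ⟨1, by norm_num⟩) = (r x, ⟨1, by norm_num⟩)) ∧
    (∀ x : M, EMap M r g (x, ⟨1, by norm_num⟩) = (x, ⟨1, by norm_num⟩)) ∧
    (∀ (x : M) (t : I2),
      (∀ h : (t : ℝ) ≤ 1,
        GMap M r g (EMap M r g (x, t)) = incl M (g (x, ⟨(t : ℝ), t.2.1, h⟩))) ∧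
      (∀ h : 1 ≤ (t : ℝ),
        GMap M r g (EMap M r g (x, t)) =
          shift M (tau M (g (tau M (x, ⟨(t : ℝ) - 1, by linarith, by
            have := t.2.2; linarith⟩)))))) := by
  -- auxiliary: only the top maps to the top
  have key : ∀ (x : M) (s : I), ((g (x, s)).2 : ℝ) = 1 → (s : ℝ) = 1 := by
    intro x s h
    have hy : g (r.symm (g (x, s)).1, 1) = ((g (x, s)).1, 1) := by
      rw [hg1]; simp
    have heq : (x, s) = (r.symm (g (x, s)).1, (1 : I)) := by
      apply g.injective
      rw [hy]
      exact Prod.ext rfl (Subtype.ext h)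
    have h2 : s = (1 : I) := congrArg Prod.snd heq
    exact congrArg Subtype.val h2
  have htau : ∀ (x : M) (s : I), tau M (x, s) = (x, unitInterval.symm s) := fun _ _ => rfl
  have heps : ∀ (x : M) (s : I), eps M r g (x, s) =
      (r.symm (g (tau M (x, s))).1, unitInterval.symm (g (tau M (x, s))).2) := by
    intro x s
    rfl
  refine ⟨?_, ?_, fun x t => ⟨?_, ?_⟩⟩
  · intro x
    have h1 : ((⟨1, by norm_num⟩ : I2) : ℝ) ≤ 1 := le_refl 1
    rw [GMap, dif_pos h1]
    have : (⟨((⟨1, by norm_num⟩ : I2) : ℝ), by norm_num, h1⟩ : I) = 1 := rfl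
    rw [this, hg1]
    rfl
  · intro x
    rw [EMap, dif_pos (le_refl 1)]
  · intro h
    rw [EMap, dif_pos h, GMap, dif_pos h]
  · intro h
    by_cases h1 : (t : ℝ) ≤ 1
    · -- t = 1
      have ht1 : (t : ℝ) = 1 := le_antisymm h1 h
      rw [EMap, dif_pos h1, GMap, dif_pos h1]
      have e1 : (⟨(t : ℝ), t.2.1, h1⟩ : I) = 1 := Subtype.ext ht1
      rw [e1, hg1]
      have e2 : (⟨(t : ℝ) - 1, by linarith, by have := t.2.2; linarith⟩ : I) = 0 := by
        apply Subtype.ext; simp [ht1]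
      have e4 : tau M (x, (0 : I)) = (x, 1) := by
        rw [htau]; simp
      have e5 : tau M (r x, (1 : I)) = (r x, 0) := by
        rw [htau]; simp
      rw [e2, e4, hg1, e5]
      refine Prod.ext rfl (Subtype.ext ?_)
      simp [incl, shift, ht1]
    · push_neg at h1
      rw [EMap, dif_neg (not_le.2 h1)]
      set s : I := ⟨(t : ℝ) - 1, by linarith, by have := t.2.2; linarith⟩ with hs
      rw [heps]
      set y := (g (tau M (x, s))).1
      set u := (g (tau M (x, s))).2
      have hu : (u : ℝ) < 1 := by
        rcases lt_or_eq_of_le u.2.2 with h' | h'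
        · exact h'
        · exfalso
          have := key x (unitInterval.symm s) (by rw [← htau]; exact h')
          have hσ : (unitInterval.symm s : ℝ) = 1 - (s : ℝ) := rfl
          rw [hσ] at this
          have : (s : ℝ) = 0 := by linarith
          rw [hs] at this
          simp at this
          linarith
      have hcond : ¬ ((shift M (r.symm y, unitInterval.symm u)).2 : ℝ) ≤ 1 := by
        have hσ : (unitInterval.symm u : ℝ) = 1 - (u : ℝ) := rfl
        simp only [shift, hσ]
        push_neg
        linarith
      rw [GMap, dif_neg hcond]
      refine Prod.ext ?_ (Subtype.ext ?_)
      · simp [shift]; rfl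
      · have hσ : (unitInterval.symm u : ℝ) = 1 - (u : ℝ) := rfl
        simp only [shift, hσ]
        rfl
end
end
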